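/- Ville's theorem: A set P ⊆ 2^ω has μ-outer measure zero if and only if there is a martingale d such that P ⊆ S[d]. -/

import Mathlib

/-!
If `d` is a martingale, stopping it at the first prefix where it reaches `c` gives again a
martingale, and a martingale averages to `d []` over the strings of each length. Counting the
strings of length `n` on which the stopped martingale is `≥ c` gives Ville's maximal inequality
`c · μ {A | ∃ m, c ≤ d (A↾m)} ≤ d []`, so `S[d]` is null.

Conversely, if `μ P = 0` choose open `Uₙ ⊇ P` with `μ Uₙ < 2⁻ⁿ`. For the finite measure
`ν = ∑ₙ μ|Uₙ` the ratio `σ ↦ ν [σ] / μ [σ]` is a martingale, and along `A ∈ P` it eventually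
exceeds `N`, because the cylinders `[A↾m]` eventually lie in `U₀, …, U_{N-1}`.
-/

open scoped ENNReal NNReal Classical

namespace AR

/-- Elements of Cantor space `2^ω`: infinite binary sequences. -/
abbrev Seq := ℕ → Bool

/-- Finite binary strings `2^{<ω}`. -/
abbrev Str := List Bool

/-- The first `n` bits of a sequence `A`, as a finite string (`A↾n`). -/
def pre (A : Seq) (n : ℕ) : Str := List.ofFn fun i : Fin n => A i

/-- The basic clopen cylinder `[σ]` of all sequences extending `σ`. -/
def cyl (σ : Str) : Set Seq := {A | pre A σ.length = σ}

/-- A measure on Cantor space is *fair-coin* if every cylinder `[σ]` has measure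
`2^{-|σ|}`; this uniquely characterizes the usual product measure `μ` on `2^ω`. -/
def FairCoin (μ : MeasureTheory.Measure Seq) : Prop :=
  ∀ σ : Str, μ (cyl σ) = (2 : ℝ≥0∞)⁻¹ ^ σ.length

/-- A machine is a partial computable function `2^{<ω} ⇀ 2^{<ω}`. -/
def IsMachine (M : Str →. Str) : Prop := Partrec M

/-- Kolmogorov complexity of `τ` relative to the machine `M`:
`C_M(τ) = min{|σ| : M(σ)↓ = τ}`, with value `∞` if no such `σ` exists. -/
noncomputable def Cplx (M : Str →. Str) (τ : Str) : ℕ∞ :=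
  sInf ((fun σ : Str => (σ.length : ℕ∞)) '' {σ | τ ∈ M σ})

/-- A universal machine: a machine simulating every machine up to an additive
constant.  `Cplx U` for universal `U` is plain Kolmogorov complexity `C`. -/
def UniversalMachine (U : Str →. Str) : Prop :=
  IsMachine U ∧ ∀ M : Str →. Str, IsMachine M → ∃ c : ℕ, ∀ τ, Cplx U τ ≤ Cplx M τ + c

/-- A set of strings is prefix-free if none of its elements is a proper initial
segment of another. -/
def PrefixFree (S : Set Str) : Prop :=
  ∀ σ ∈ S, ∀ τ ∈ S, σ <+: τ → σ = τ

/-- A prefix-free machine: a machine whose domain is prefix-free. -/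
def PrefixFreeMachine (M : Str →. Str) : Prop :=
  IsMachine M ∧ PrefixFree {σ | (M σ).Dom}

/-- A universal prefix-free machine.  `Cplx U` for such `U` is prefix-free
Kolmogorov complexity `K`. -/
def UniversalPFMachine (U : Str →. Str) : Prop :=
  PrefixFreeMachine U ∧
    ∀ M : Str →. Str, PrefixFreeMachine M → ∃ c : ℕ, ∀ τ, Cplx U τ ≤ Cplx M τ + c

/-- A c.e. (recursively enumerable) predicate. -/
def CEPred {α} [Primcodable α] (p : α → Prop) : Prop :=
  Partrec fun a => Part.assert (p a) fun _ => Part.some ()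

/-- A Martin-Löf test: a sequence of uniformly Σ⁰₁ classes `U i`, given by a single
c.e. set `W` of pairs, with `μ (U i) ≤ 2^{-i}`. -/
def MLTest (μ : MeasureTheory.Measure Seq) (U : ℕ → Set Seq) : Prop :=
  ∃ W : Set (ℕ × Str), CEPred (· ∈ W) ∧
    (∀ i, U i = ⋃ σ ∈ {σ : Str | (i, σ) ∈ W}, cyl σ) ∧
    ∀ i, μ (U i) ≤ (2 : ℝ≥0∞)⁻¹ ^ i

/-- `A` is Martin-Löf random if it passes every Martin-Löf test. -/
def MLRandom (μ : MeasureTheory.Measure Seq) (A : Seq) : Prop :=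
  ∀ U : ℕ → Set Seq, MLTest μ U → A ∉ ⋂ i, U i

/-- A martingale: a nonnegative function on strings satisfying the fairness
condition `d(σ) = (d(σ0) + d(σ1))/2`. -/
def IsMartingale (d : Str → ℝ≥0) : Prop :=
  ∀ σ : Str, d σ = (d (σ ++ [false]) + d (σ ++ [true])) / 2

/-- An `s`-gale: `d(σ) = 2^{-s} (d(σ0) + d(σ1))`. -/
def IsGale (s : ℝ) (d : Str → ℝ≥0) : Prop :=
  ∀ σ : Str, (d σ : ℝ) = (2 : ℝ) ^ (-s) * ((d (σ ++ [false]) : ℝ) + (d (σ ++ [true]) : ℝ))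

/-- `d` succeeds on `A` if `limsup_n d(A↾n) = ∞`. -/
def Succeeds (d : Str → ℝ≥0) (A : Seq) : Prop :=
  Filter.limsup (fun n => (d (pre A n) : ℝ≥0∞)) Filter.atTop = ⊤

/-- The success set `S[d]` of `d`. -/
def successSet (d : Str → ℝ≥0) : Set Seq := {A | Succeeds d A}

/-- The values of `d` are uniformly left-c.e. reals: there is a computable
`g : 2^{<ω} × ℕ → ℚ`, nondecreasing in the second argument, with
`sup_n g(σ, n) = d(σ)` (i.e. `g(σ, ·) → d(σ)`) for every `σ`.  A martingale
(or `s`-gale) with this property is a c.e. martingale (or c.e. `s`-gale). -/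
def CEValues (d : Str → ℝ≥0) : Prop :=
  ∃ g : Str × ℕ → ℚ, Computable g ∧ (∀ σ, Monotone fun n => g (σ, n)) ∧
    ∀ σ, Filter.Tendsto (fun n => (g (σ, n) : ℝ)) Filter.atTop (nhds (d σ))

open MeasureTheory Filter Topology
open scoped Finset

variable {μ : Measure Seq} {d : Str → ℝ≥0}

@[simp] lemma length_pre (A : Seq) (n : ℕ) : (pre A n).length = n := List.length_ofFn

lemma pre_take (A : Seq) {m n : ℕ} (h : m ≤ n) : (pre A n).take m = pre A m := by
  apply List.ext_getElem (by simp [h])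
  intro i _ _
  simp [pre]

lemma pre_succ (A : Seq) (n : ℕ) : pre A (n + 1) = pre A n ++ [A n] := by
  rw [pre, List.ofFn_succ', List.concat_eq_append]
  rfl

lemma pre_eq_pre_iff {A B : Seq} {n : ℕ} : pre B n = pre A n ↔ ∀ i < n, B i = A i := by
  simp [pre, List.ofFn_inj, funext_iff, Fin.forall_iff]

lemma cyl_pre (A : Seq) (n : ℕ) : cyl (pre A n) = PiNat.cylinder A n := by
  ext B
  simp [cyl, pre_eq_pre_iff, PiNat.mem_cylinder_iff]

lemma pre_getD (σ : Str) : pre (fun i => σ.getD i false) σ.length = σ := by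
  apply List.ext_getElem (by simp)
  intro i _ _
  simp [pre]

lemma isOpen_cyl (σ : Str) : IsOpen (cyl σ) := by
  have := PiNat.isOpen_cylinder _ (fun i => σ.getD i false) σ.length
  rwa [← cyl_pre, pre_getD] at this

lemma measurableSet_cyl (σ : Str) : MeasurableSet (cyl σ) := (isOpen_cyl σ).measurableSet

@[simp] lemma cyl_nil : cyl [] = Set.univ := by
  ext A
  simp [cyl, pre]

lemma mem_cyl_append {A : Seq} {σ : Str} {b : Bool} :
    A ∈ cyl (σ ++ [b]) ↔ A ∈ cyl σ ∧ A σ.length = b := by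
  simp only [cyl, Set.mem_ofPred_eq, List.length_append, List.length_singleton, pre_succ,
    List.append_singleton_inj]

lemma cyl_eq_union_append (σ : Str) : cyl σ = cyl (σ ++ [false]) ∪ cyl (σ ++ [true]) := by
  ext A
  cases h : A σ.length <;> simp [mem_cyl_append, h]

lemma disjoint_cyl_append (σ : Str) : Disjoint (cyl (σ ++ [false])) (cyl (σ ++ [true])) :=
  Set.disjoint_left.2 fun A h₀ h₁ => by simp_all [mem_cyl_append]

lemma eventually_cyl_pre_subset {U : Set Seq} {A : Seq} (hU : U ∈ 𝓝 A) :
    ∀ᶠ n in atTop, cyl (pre A n) ⊆ U := by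
  obtain ⟨_, ⟨B, n, rfl⟩, hA, hsub⟩ := (PiNat.isTopologicalBasis_cylinders _).mem_nhds_iff.1 hU
  rw [← PiNat.mem_cylinder_iff_eq.1 hA] at hsub
  filter_upwards [eventually_ge_atTop n] with m hm
  rw [cyl_pre]
  exact (PiNat.cylinder_anti A hm).trans hsub

lemma FairCoin.isProbabilityMeasure (hμ : FairCoin μ) : IsProbabilityMeasure μ :=
  ⟨by simpa using hμ []⟩

lemma FairCoin.measure_setOf_pre_le (hμ : FairCoin μ) (p : Str → Prop) (n : ℕ) :
    μ {A | p (pre A n)} ≤ #{x : Fin n → Bool | p (List.ofFn x)} * 2⁻¹ ^ n := by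
  calc μ {A | p (pre A n)}
      ≤ μ (⋃ x ∈ ({x | p (List.ofFn x)} : Finset (Fin n → Bool)), cyl (List.ofFn x)) :=
        measure_mono fun A hA =>
          Set.mem_iUnion₂.2 ⟨fun i => A i, by simpa [pre] using hA, by simp [cyl, pre]⟩
    _ ≤ ∑ x ∈ ({x | p (List.ofFn x)} : Finset (Fin n → Bool)), μ (cyl (List.ofFn x)) :=
        measure_biUnion_finset_le _ _
    _ = _ := by
        rw [Finset.sum_congr rfl fun x _ => (hμ _).trans (by rw [List.length_ofFn])]
        simp

lemma IsMartingale.cons (hd : IsMartingale d) (b : Bool) : IsMartingale fun σ => d (b :: σ) :=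
  fun σ => hd (b :: σ)

lemma IsMartingale.sum_ofFn (hd : IsMartingale d) (n : ℕ) :
    ∑ x : Fin n → Bool, d (List.ofFn x) = 2 ^ n * d [] := by
  induction n generalizing d with
  | zero => simp
  | succ n ih =>
    have hcons (b : Bool) (y : Fin n → Bool) :
        List.ofFn (Fin.consEquiv (fun _ => Bool) (b, y)) = b :: List.ofFn y :=
      List.ofFn_cons b y
    rw [← (Fin.consEquiv fun _ => Bool).sum_comp, Fintype.sum_prod_type, Fintype.sum_bool]
    simp only [hcons, ih (hd.cons _)]
    have hroot := hd []
    simp only [List.nil_append] at hroot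
    rw [hroot, pow_succ]
    field_simp
    ring

lemma IsMartingale.mul_card_ge_le (hd : IsMartingale d) (c : ℝ≥0) (n : ℕ) :
    c * #{x : Fin n → Bool | c ≤ d (List.ofFn x)} ≤ 2 ^ n * d [] :=
  calc c * #{x : Fin n → Bool | c ≤ d (List.ofFn x)}
      ≤ ∑ x ∈ {x : Fin n → Bool | c ≤ d (List.ofFn x)}, d (List.ofFn x) := by
        rw [mul_comm, ← nsmul_eq_mul]
        exact Finset.card_nsmul_le_sum _ _ _ fun x hx => (Finset.mem_filter.1 hx).2
    _ ≤ ∑ x : Fin n → Bool, d (List.ofFn x) :=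
        Finset.sum_le_sum_of_subset (Finset.subset_univ _)
    _ = 2 ^ n * d [] := hd.sum_ofFn n

lemma IsMartingale.mul_measure_ge_le (hμ : FairCoin μ) (hd : IsMartingale d) (c : ℝ≥0)
    (n : ℕ) : c * μ {A | c ≤ d (pre A n)} ≤ d [] :=
  calc (c : ℝ≥0∞) * μ {A | c ≤ d (pre A n)}
      ≤ c * (#{x : Fin n → Bool | c ≤ d (List.ofFn x)} * 2⁻¹ ^ n) := by
        gcongr
        exact hμ.measure_setOf_pre_le (c ≤ d ·) n
    _ = ((c * #{x : Fin n → Bool | c ≤ d (List.ofFn x)} : ℝ≥0) : ℝ≥0∞) * 2⁻¹ ^ n := by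
        push_cast
        ring
    _ ≤ ((2 ^ n * d [] : ℝ≥0) : ℝ≥0∞) * 2⁻¹ ^ n :=
        mul_le_mul_of_nonneg_right (ENNReal.coe_le_coe.2 (hd.mul_card_ge_le c n)) zero_le
    _ = d [] := by
        push_cast
        rw [mul_right_comm, ← mul_pow, ENNReal.mul_inv_cancel two_ne_zero ENNReal.ofNat_ne_top,
          one_pow, one_mul]

/-- The value of `d` at the shortest prefix of `σ` where `d` reaches `c`, or `d σ` if there is
none. -/
noncomputable def stopAbove (c : ℝ≥0) : (Str → ℝ≥0) → Str → ℝ≥0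
  | d, [] => d []
  | d, b :: σ => if c ≤ d [] then d [] else stopAbove c (fun τ => d (b :: τ)) σ

lemma isMartingale_stopAbove (hd : IsMartingale d) (c : ℝ≥0) :
    IsMartingale (stopAbove c d) := by
  intro σ
  induction σ generalizing d with
  | nil =>
    by_cases h : c ≤ d []
    · simp [stopAbove, h]
    · simpa [stopAbove, h] using hd []
  | cons b σ ih => by_cases h : c ≤ d [] <;> simp [stopAbove, h, ih (hd.cons b)]

lemma le_stopAbove {c : ℝ≥0} {σ : Str} {m : ℕ} (hm : m ≤ σ.length) (h : c ≤ d (σ.take m)) :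
    c ≤ stopAbove c d σ := by
  induction σ generalizing d m with
  | nil => simpa [stopAbove] using h
  | cons b σ ih =>
    by_cases h₀ : c ≤ d []
    · simp [stopAbove, h₀]
    cases m with
    | zero => exact absurd h h₀
    | succ m =>
      simp only [stopAbove, h₀, if_false]
      exact ih (by simpa using hm) h

theorem IsMartingale.maximal_ineq (hμ : FairCoin μ) (hd : IsMartingale d) (c : ℝ≥0) :
    c * μ {A | ∃ m, c ≤ d (pre A m)} ≤ d [] := by
  have hunion : {A | ∃ m, c ≤ d (pre A m)} = ⋃ n, {A | ∃ m ≤ n, c ≤ d (pre A m)} := by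
    ext A
    simp only [Set.mem_ofPred_eq, Set.mem_iUnion]
    exact ⟨fun ⟨m, hm⟩ => ⟨m, m, le_rfl, hm⟩, fun ⟨_, m, _, hm⟩ => ⟨m, hm⟩⟩
  have hmono : Monotone fun n => {A | ∃ m ≤ n, c ≤ d (pre A m)} :=
    fun n n' h A ⟨m, hm, hc⟩ => ⟨m, hm.trans h, hc⟩
  rw [hunion, hmono.measure_iUnion, ENNReal.mul_iSup]
  refine iSup_le fun n => ?_
  have hstop : {A | ∃ m ≤ n, c ≤ d (pre A m)} ⊆ {A | c ≤ stopAbove c d (pre A n)} :=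
    fun A ⟨m, hm, hc⟩ => le_stopAbove (by simpa) (by rwa [pre_take A hm])
  calc (c : ℝ≥0∞) * μ {A | ∃ m ≤ n, c ≤ d (pre A m)}
      ≤ c * μ {A | c ≤ stopAbove c d (pre A n)} := by gcongr
    _ ≤ stopAbove c d [] := (isMartingale_stopAbove hd c).mul_measure_ge_le hμ c n
    _ = d [] := rfl

lemma succeeds_iff {A : Seq} :
    Succeeds d A ↔ ∀ N : ℕ, ∃ᶠ m in atTop, (N : ℝ≥0) ≤ d (pre A m) := by
  refine ⟨fun h N => ?_, fun h => ?_⟩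
  · have : ((N : ℝ≥0) : ℝ≥0∞) < limsup (fun m => (d (pre A m) : ℝ≥0∞)) atTop := by
      rw [show limsup _ _ = ⊤ from h]
      exact ENNReal.coe_lt_top
    exact (frequently_lt_of_lt_limsup (by isBoundedDefault) this).mono
      fun m hm => ENNReal.coe_le_coe.1 hm.le
  · refine ENNReal.eq_top_of_forall_nnreal_le fun r => ?_
    obtain ⟨N, hN⟩ := exists_nat_ge r
    exact le_limsup_of_frequently_le'
      ((h N).mono fun m hm => ENNReal.coe_le_coe.2 (hN.trans hm))

theorem IsMartingale.measure_successSet (hμ : FairCoin μ) (hd : IsMartingale d) :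
    μ (successSet d) = 0 := by
  by_contra h
  obtain ⟨N, hN⟩ := ENNReal.exists_nat_mul_gt h (ENNReal.coe_ne_top (r := d []))
  have hsub : successSet d ⊆ {A | ∃ m, (N : ℝ≥0) ≤ d (pre A m)} :=
    fun A hA => (succeeds_iff.1 hA N).exists
  refine hN.not_ge ?_
  calc (N : ℝ≥0∞) * μ (successSet d)
      ≤ (N : ℝ≥0) * μ {A | ∃ m, (N : ℝ≥0) ≤ d (pre A m)} := by
        rw [ENNReal.coe_natCast]
        gcongr
    _ ≤ d [] := hd.maximal_ineq hμ N

/-- The likelihood ratio `ν [σ] / μ [σ]` against the fair-coin measure `μ`. -/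
noncomputable def cylRatio (ν : Measure Seq) (σ : Str) : ℝ≥0 :=
  (2 ^ σ.length * ν (cyl σ)).toNNReal

lemma isMartingale_cylRatio (ν : Measure Seq) [IsFiniteMeasure ν] :
    IsMartingale (cylRatio ν) := by
  intro σ
  have hsplit : ν (cyl σ) = ν (cyl (σ ++ [false])) + ν (cyl (σ ++ [true])) := by
    conv_lhs => rw [cyl_eq_union_append σ]
    exact measure_union (disjoint_cyl_append σ) (measurableSet_cyl _)
  rw [eq_div_iff two_ne_zero, cylRatio, cylRatio, cylRatio,
    ← ENNReal.toNNReal_add (by finiteness) (by finiteness), ← ENNReal.toNNReal_ofNat 2,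
    ← ENNReal.toNNReal_mul, hsplit]
  congr 1
  simp only [List.length_append, List.length_singleton, pow_succ]
  ring

lemma le_cylRatio {ν : Measure Seq} [IsFiniteMeasure ν] {c : ℝ≥0} {σ : Str}
    (h : c * 2⁻¹ ^ σ.length ≤ ν (cyl σ)) : c ≤ cylRatio ν σ := by
  refine ENNReal.le_toNNReal_of_coe_le ?_ (by finiteness)
  calc (c : ℝ≥0∞) = 2 ^ σ.length * (c * 2⁻¹ ^ σ.length) := by
        rw [mul_left_comm, ← mul_pow, ENNReal.mul_inv_cancel two_ne_zero ENNReal.ofNat_ne_top,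
          one_pow, mul_one]
    _ ≤ 2 ^ σ.length * ν (cyl σ) := by gcongr

theorem exists_isMartingale_subset_successSet (hμ : FairCoin μ) {P : Set Seq} (hP : μ P = 0) :
    ∃ d, IsMartingale d ∧ P ⊆ successSet d := by
  -- finite, hence outer regular
  have := hμ.isProbabilityMeasure
  choose U hPU hUopen hUμ using fun n : ℕ =>
    Set.exists_isOpen_lt_of_lt (μ := μ) P (2⁻¹ ^ n) (by simp [hP, pos_iff_ne_zero])
  set ν := Measure.sum fun n => μ.restrict (U n)
  have : IsFiniteMeasure ν := ⟨calc ν Set.univ = ∑' n, μ (U n) := by simp [ν]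
      _ ≤ ∑' n : ℕ, 2⁻¹ ^ n := ENNReal.tsum_le_tsum fun n => (hUμ n).le
      _ < ⊤ := by simp⟩
  refine ⟨cylRatio ν, isMartingale_cylRatio ν, fun A hA => succeeds_iff.2 fun N => ?_⟩
  have hsub : ∀ᶠ m in atTop, ∀ n ∈ Finset.range N, cyl (pre A m) ⊆ U n :=
    (Finset.eventually_all _).2 fun n _ =>
      eventually_cyl_pre_subset ((hUopen n).mem_nhds (hPU n hA))
  refine (hsub.mono fun m hm => le_cylRatio ?_).frequently
  calc (N : ℝ≥0∞) * 2⁻¹ ^ (pre A m).length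
      = ∑ n ∈ Finset.range N, μ.restrict (U n) (cyl (pre A m)) := by
        rw [Finset.sum_congr rfl fun n hn => by
          rw [Measure.restrict_apply (measurableSet_cyl _), Set.inter_eq_left.2 (hm n hn), hμ]]
        simp
    _ ≤ ∑' n, μ.restrict (U n) (cyl (pre A m)) := ENNReal.sum_le_tsum _
    _ = ν (cyl (pre A m)) := (Measure.sum_apply _ (measurableSet_cyl _)).symm

/-- **Ville's theorem**: `P ⊆ 2^ω` has (outer) measure zero if and only if there is a
martingale `d` with `P ⊆ S[d]`. -/
theorem ville (μ : MeasureTheory.Measure Seq) (hμ : FairCoin μ) (P : Set Seq) :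
    μ P = 0 ↔ ∃ d : Str → ℝ≥0, IsMartingale d ∧ P ⊆ successSet d :=
  ⟨exists_isMartingale_subset_successSet hμ,
    fun ⟨_, hd, hPd⟩ => measure_mono_null hPd (hd.measure_successSet hμ)⟩

end AR
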